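/- arXiv:2305.12180 — 5 statements merged into one kernel-verified Lean document; each statement's English description precedes it below -/
import Mathlib

section
/- Let X be a topological space, let Φ : X → ℝ be a function with Φ⁻¹(0) ≠ ∅, and let J : X → ℝ be a function such that for every real λ > 0 the function x ↦ λΦ(x) − J(x) is lower semicontinuous, inf-compact, and admits a unique global minimum on X. Assume moreover that J has no global maximum on X. Let I ⊆ (0, +∞) be an open interval and let Ψ : I → ℝ be an increasing function with Ψ(I) = (0, +∞). Then there exists a unique point x̃ ∈ X such that Φ(x̃) ∈ I and Ψ(Φ(x̃))·Φ(x̃) − J(x̃) = inf_{x ∈ X} ( Ψ(Φ(x̃))·Φ(x) − J(x) ). -/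
/-!
For `t > 0` let `x t` be the minimizer of `t Φ - J` and `φ t = Φ (x t)`. Comparing the
minimality of `x s` and `x t` shows that `φ` is antitone; lower semicontinuity and
inf-compactness make a cluster point of minimizers a minimizer, which by uniqueness gives
continuity of `φ`. As `t → 0⁺`, boundedness of `φ` would turn a cluster point of `x t` into a
global maximum of `J`, so `φ` is unbounded; and `Φ (x₀) = 0` forces `φ t ≤ C / (t - 1)` for
`t > 1`. With `σ = Ψ⁻¹ : (0, ∞) → I`, strictly increasing and continuous, the intermediate value
theorem and monotonicity give exactly one `λ` with `φ λ = σ λ`, i.e. `Ψ (Φ (x λ)) = λ`. Any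
admissible `x̃` equals `x (Ψ (Φ x̃))`, so `x̃ = x λ`.
-/

open Filter Topology Set Function

section Topology

variable {X α : Type*} [TopologicalSpace X] {f : X → ℝ} {l : Filter α} {u : α → X}
  {g : α → ℝ} {L : ℝ}

theorem LowerSemicontinuous.le_of_mapClusterPt (hf : LowerSemicontinuous f) {x : X}
    (hx : MapClusterPt x l u) (hg : Tendsto g l (𝓝 L)) (hle : ∀ᶠ a in l, f (u a) ≤ g a) :
    f x ≤ L := by
  by_contra! hLx
  obtain ⟨y, hLy, hyx⟩ := exists_between hLx
  have hlt : ∀ᶠ a in l, f (u a) < y :=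
    (hg.eventually_lt_const hLy).and hle |>.mono fun a h => h.2.trans_lt h.1
  exact (hx.frequently (hf x y hyx)).and_eventually hlt |>.exists.elim
    fun a h => h.1.not_gt h.2

theorem exists_mapClusterPt_of_isCompact_sublevel [l.NeBot]
    (hf : ∀ r, IsCompact {x | f x ≤ r}) (hg : Tendsto g l (𝓝 L))
    (hle : ∀ᶠ a in l, f (u a) ≤ g a) : ∃ x, MapClusterPt x l u := by
  obtain ⟨x, -, hx⟩ := (hf (L + 1)).exists_mapClusterPt (u := u) <| le_principal_iff.2 <|
    (hg.eventually_le_const (lt_add_one L)).and hle |>.mono fun a h => h.2.trans h.1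
  exact ⟨x, hx⟩

end Topology

section Inverse

variable {α β : Type*} [LinearOrder α] [Nonempty α] [LinearOrder β] {f : α → β} {s : Set α}

theorem StrictMonoOn.strictMonoOn_invFunOn (hf : StrictMonoOn f s) :
    StrictMonoOn (invFunOn f s) (f '' s) := by
  have hinv := (surjOn_image f s).rightInvOn_invFunOn
  have hmaps := (surjOn_image f s).mapsTo_invFunOn
  intro p hp q hq hpq
  rw [← hf.lt_iff_lt (hmaps hp) (hmaps hq), hinv hp, hinv hq]
  exact hpq

theorem StrictMonoOn.continuousOn_invFunOn [TopologicalSpace α] [OrderTopology α]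
    [DenselyOrdered α] [TopologicalSpace β] [OrderTopology β] (hf : StrictMonoOn f s)
    (hs : IsOpen s) (hfs : IsOpen (f '' s)) : ContinuousOn (invFunOn f s) (f '' s) := by
  refine fun p hp => (hf.strictMonoOn_invFunOn.continuousAt_of_image_mem_nhds
    (hfs.mem_nhds hp) ?_).continuousWithinAt
  rw [hf.injOn.leftInvOn_invFunOn.image_image]
  exact hs.mem_nhds ((surjOn_image f s).mapsTo_invFunOn hp)

end Inverse

theorem existsUnique_eq_of_antitoneOn_of_strictMonoOn {f g : ℝ → ℝ}
    (hf : AntitoneOn f (Ioi 0)) (hfc : ContinuousOn f (Ioi 0))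
    (hg : StrictMonoOn g (Ioi 0)) (hgc : ContinuousOn g (Ioi 0))
    (hf_top : ¬ BddAbove (f '' Ioi 0)) (hf_bot : ∀ ε, 0 < ε → ∃ b, 0 < b ∧ f b < ε)
    (hg_pos : 0 < g 1) : ∃! t, 0 < t ∧ f t = g t := by
  simp only [bddAbove_def, mem_image, mem_Ioi, forall_exists_index, and_imp,
    forall_apply_eq_imp_iff₂, not_exists, not_forall, not_le] at hf_top
  obtain ⟨a, ha, hga⟩ := hf_top (g 1)
  obtain ⟨b, hb, hfb⟩ := hf_bot _ hg_pos
  have ha' : 0 < min a 1 := lt_min ha one_pos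
  have hb' : 0 < max b 1 := lt_max_of_lt_right one_pos
  have h1 : (1 : ℝ) ∈ Ioi 0 := mem_Ioi.2 one_pos
  have hlow : g (min a 1) < f (min a 1) := calc
    g (min a 1) ≤ g 1 := hg.monotoneOn ha' h1 (min_le_right a 1)
    _ < f a := hga
    _ ≤ f (min a 1) := hf ha' ha (min_le_left a 1)
  have hhigh : f (max b 1) < g (max b 1) := calc
    f (max b 1) ≤ f b := hf hb hb' (le_max_left b 1)
    _ < g 1 := hfb
    _ ≤ g (max b 1) := hg.monotoneOn h1 hb' (le_max_right b 1)
  have hsub : Icc (min a 1) (max b 1) ⊆ Ioi 0 := fun t ht => ha'.trans_le ht.1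
  have hcont : ContinuousOn (fun t => f t - g t) (Icc (min a 1) (max b 1)) :=
    (hfc.sub hgc).mono hsub
  obtain ⟨t, ht, hzero⟩ := intermediate_value_Icc' ((min_le_right a 1).trans (le_max_right b 1))
    hcont (show (0 : ℝ) ∈ Icc _ _ from ⟨by linarith, by linarith⟩)
  have hft : f t = g t := sub_eq_zero.1 hzero
  refine ⟨t, ⟨hsub ht, hft⟩, fun s ⟨hs, hfs⟩ => ?_⟩
  by_contra hne
  rcases lt_or_gt_of_ne hne with hst | hts
  · linarith [hf hs (hsub ht) hst.le, hg hs (hsub ht) hst]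
  · linarith [hf (hsub ht) hs hts.le, hg (hsub ht) hs hts]

section MinimizerFamily

variable {X : Type*} {Φ J : X → ℝ} {x : ℝ → X}

def IsMinimizerFamily (Φ J : X → ℝ) (x : ℝ → X) : Prop :=
  ∀ t, 0 < t → ∀ y, t * Φ (x t) - J (x t) ≤ t * Φ y - J y

namespace IsMinimizerFamily

theorem penalized_le (hx : IsMinimizerFamily Φ J x) {t : ℝ} (ht : 0 < t) (y : X) (μ : ℝ) :
    μ * Φ (x t) - J (x t) ≤ t * Φ y - J y + (μ - t) * Φ (x t) := by
  linarith [hx t ht y]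

theorem antitoneOn (hx : IsMinimizerFamily Φ J x) : AntitoneOn (fun t => Φ (x t)) (Ioi 0) := by
  intro a ha b hb hab
  rcases hab.eq_or_lt with rfl | hlt
  · rfl
  have h1 := hx a ha (x b)
  have h2 := hx b hb (x a)
  nlinarith

theorem exists_pos_lt (hx : IsMinimizerFamily Φ J x) {x₀ : X} (hx₀ : Φ x₀ = 0) {ε : ℝ}
    (hε : 0 < ε) : ∃ b, 0 < b ∧ Φ (x b) < ε := by
  set C := -J x₀ - (Φ (x 1) - J (x 1))
  have hdecay : ∀ b, 0 < b → (b - 1) * Φ (x b) ≤ C := fun b hb => by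
    have h1 := hx.penalized_le hb x₀ 1
    have h2 := hx 1 one_pos (x b)
    rw [hx₀] at h1
    linarith
  refine ⟨2 + |C| / ε, by positivity, ?_⟩
  by_contra! h
  have := hdecay (2 + |C| / ε) (by positivity)
  have : ε * (1 + |C| / ε) = ε + |C| := by field_simp
  nlinarith [le_abs_self C, div_nonneg (abs_nonneg C) hε.le]

variable [TopologicalSpace X]

theorem eq_of_tendsto (hx : IsMinimizerFamily Φ J x)
    (hlsc : ∀ μ, 0 < μ → LowerSemicontinuous (fun y => μ * Φ y - J y))
    {lam : ℝ} (hlam : 0 < lam) (hcpt : ∀ r, IsCompact {y | lam * Φ y - J y ≤ r})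
    (huniq : ∀ y, (∀ z, lam * Φ y - J y ≤ lam * Φ z - J z) → y = x lam)
    {l : Filter ℝ} [l.NeBot] (hl : l ≤ 𝓝 lam) {c : ℝ}
    (hc : Tendsto (fun t => Φ (x t)) l (𝓝 c)) : c = Φ (x lam) := by
  have hbound : ∀ μ, Tendsto (fun t => t * Φ (x lam) - J (x lam) + (μ - t) * Φ (x t)) l
      (𝓝 (lam * Φ (x lam) - J (x lam) + (μ - lam) * c)) := fun μ =>
    (((tendsto_id.mono_left hl).mul_const _).sub_const _).add
      ((tendsto_const_nhds.sub (tendsto_id.mono_left hl)).mul hc)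
  have hle : ∀ μ, ∀ᶠ t in l, μ * Φ (x t) - J (x t) ≤
      t * Φ (x lam) - J (x lam) + (μ - t) * Φ (x t) := fun μ =>
    ((eventually_gt_nhds hlam).filter_mono hl).mono fun t ht => hx.penalized_le ht (x lam) μ
  obtain ⟨xs, hxs⟩ := exists_mapClusterPt_of_isCompact_sublevel hcpt (hbound lam) (hle lam)
  have hlim : ∀ μ, 0 < μ → μ * Φ xs - J xs ≤ lam * Φ (x lam) - J (x lam) + (μ - lam) * c :=
    fun μ hμ => (hlsc μ hμ).le_of_mapClusterPt hxs (hbound μ) (hle μ)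
  obtain rfl : xs = x lam := huniq xs fun z => by
    have := hlim lam hlam
    rw [sub_self, zero_mul, add_zero] at this
    exact this.trans (hx lam hlam z)
  -- `hlim μ` now reads `(μ - lam) * (Φ (x lam) - c) ≤ 0`; take `μ` on either side of `lam`.
  have hup := hlim (lam + 1) (by linarith)
  have hdown := hlim (lam / 2) (by linarith)
  apply le_antisymm <;> nlinarith

theorem continuousAt (hx : IsMinimizerFamily Φ J x)
    (hlsc : ∀ μ, 0 < μ → LowerSemicontinuous (fun y => μ * Φ y - J y))
    {lam : ℝ} (hlam : 0 < lam) (hcpt : ∀ r, IsCompact {y | lam * Φ y - J y ≤ r})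
    (huniq : ∀ y, (∀ z, lam * Φ y - J y ≤ lam * Φ z - J z) → y = x lam) :
    ContinuousAt (fun t => Φ (x t)) lam := by
  have hIcc : Icc (lam / 2) (2 * lam) ∈ 𝓝 lam := Icc_mem_nhds (by linarith) (by linarith)
  refine isCompact_Icc.tendsto_nhds_of_unique_mapClusterPt (s := Icc (Φ (x (2 * lam)))
    (Φ (x (lam / 2)))) (mem_of_superset hIcc fun t ht => ?_) fun c _ hc => ?_
  · have ht0 : 0 < t := by linarith [ht.1]
    exact ⟨hx.antitoneOn ht0 (mem_Ioi.2 (by linarith)) ht.2,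
      hx.antitoneOn (mem_Ioi.2 (by linarith)) ht0 ht.1⟩
  · obtain ⟨U, hU, hcU⟩ := mapClusterPt_iff_ultrafilter.1 hc
    exact hx.eq_of_tendsto hlsc hlam hcpt huniq hU hcU

theorem exists_forall_le_of_bddAbove (hx : IsMinimizerFamily Φ J x)
    (hlsc : ∀ μ, 0 < μ → LowerSemicontinuous (fun y => μ * Φ y - J y))
    {lam : ℝ} (hlam : 0 < lam) (hcpt : ∀ r, IsCompact {y | lam * Φ y - J y ≤ r})
    (hbdd : BddAbove ((fun t => Φ (x t)) '' Ioi 0)) : ∃ x₀, ∀ y, J y ≤ J x₀ := by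
  obtain ⟨M, hM⟩ := hbdd
  have hbound : ∀ μ y, Tendsto (fun t => t * Φ y - J y + (μ - t) * M) (𝓝[>] 0)
      (𝓝 (μ * M - J y)) := fun μ y =>
    tendsto_nhdsWithin_of_tendsto_nhds ((by fun_prop : Continuous _).tendsto' 0 _ (by ring))
  have hle : ∀ μ, 0 < μ → ∀ y, ∀ᶠ t in 𝓝[>] 0,
      μ * Φ (x t) - J (x t) ≤ t * Φ y - J y + (μ - t) * M := fun μ hμ y =>
    mem_of_superset (Ioo_mem_nhdsGT hμ) fun t ht =>
      (hx.penalized_le ht.1 y μ).trans <| by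
        gcongr
        · linarith [ht.2]
        · exact hM ⟨t, ht.1, rfl⟩
  obtain ⟨xs, hxs⟩ := exists_mapClusterPt_of_isCompact_sublevel hcpt (hbound lam (x lam))
    (hle lam hlam (x lam))
  -- `J y ≤ J xs + μ * (M - Φ xs)` for every `μ > 0`; let `μ → 0⁺`.
  refine ⟨xs, fun y => ge_of_tendsto (x := 𝓝[>] 0) (f := fun μ => J xs + μ * (M - Φ xs))
    (tendsto_nhdsWithin_of_tendsto_nhds ((by fun_prop : Continuous _).tendsto' 0 _ (by simp))) ?_⟩
  filter_upwards [self_mem_nhdsWithin] with μ hμ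
  have := (hlsc μ hμ).le_of_mapClusterPt hxs (hbound μ y) (hle μ hμ y)
  linarith

end IsMinimizerFamily

end MinimizerFamily

theorem stmt0_general {X : Type*} [TopologicalSpace X] (Φ J : X → ℝ)
    (hΦ0 : ∃ x, Φ x = 0)
    (hlsc : ∀ lam : ℝ, 0 < lam → LowerSemicontinuous (fun x => lam * Φ x - J x))
    (hinfcpt : ∀ lam : ℝ, 0 < lam → ∀ r : ℝ, IsCompact {x | lam * Φ x - J x ≤ r})
    (hmin : ∀ lam : ℝ, 0 < lam →
      ∃! x₀ : X, ∀ x, lam * Φ x₀ - J x₀ ≤ lam * Φ x - J x)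
    (hJ : ¬ ∃ x₀ : X, ∀ x, J x ≤ J x₀)
    (I : Set ℝ) (hIsub : I ⊆ Set.Ioi 0) (hIopen : IsOpen I)
    (Ψ : ℝ → ℝ) (hΨmono : StrictMonoOn Ψ I) (hΨsurj : Ψ '' I = Set.Ioi 0) :
    ∃! xt : X, Φ xt ∈ I ∧
      ∀ x, Ψ (Φ xt) * Φ xt - J xt ≤ Ψ (Φ xt) * Φ x - J x := by
  obtain ⟨x₀, hx₀⟩ := hΦ0
  have : Nonempty X := ⟨x₀⟩
  choose! x hx using fun t (ht : 0 < t) => (hmin t ht).exists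
  have hfamily : IsMinimizerFamily Φ J x := hx
  have huniq : ∀ t, 0 < t → ∀ y, (∀ z, t * Φ y - J y ≤ t * Φ z - J z) → y = x t :=
    fun t ht y hy => (hmin t ht).unique hy (hx t ht)
  set σ := invFunOn Ψ I
  have hσI : MapsTo σ (Ioi 0) I := hΨsurj ▸ (surjOn_image Ψ I).mapsTo_invFunOn
  have hΨσ : ∀ t ∈ Ioi 0, Ψ (σ t) = t := hΨsurj ▸ (surjOn_image Ψ I).rightInvOn_invFunOn
  have hσΨ : ∀ s ∈ I, σ (Ψ s) = s := hΨmono.injOn.leftInvOn_invFunOn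
  obtain ⟨lam, ⟨hlam, hfix⟩, hlam_uniq⟩ := existsUnique_eq_of_antitoneOn_of_strictMonoOn
    hfamily.antitoneOn
    (fun t ht => (hfamily.continuousAt hlsc ht (hinfcpt t ht) (huniq t ht)).continuousWithinAt)
    (hΨsurj ▸ hΨmono.strictMonoOn_invFunOn)
    (hΨsurj ▸ hΨmono.continuousOn_invFunOn hIopen (hΨsurj ▸ isOpen_Ioi))
    (fun hbdd => hJ (hfamily.exists_forall_le_of_bddAbove hlsc one_pos (hinfcpt 1 one_pos) hbdd))
    (fun ε hε => hfamily.exists_pos_lt hx₀ hε) (hIsub (hσI (mem_Ioi.2 one_pos)))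
  have hΨlam : Ψ (Φ (x lam)) = lam := hfix ▸ hΨσ lam hlam
  refine ⟨x lam, ⟨hfix ▸ hσI hlam, by rw [hΨlam]; exact hx lam hlam⟩, fun y ⟨hyI, hymin⟩ => ?_⟩
  have hν : Ψ (Φ y) ∈ Ioi 0 := hΨsurj ▸ mem_image_of_mem Ψ hyI
  have hy : y = x (Ψ (Φ y)) := huniq _ hν y hymin
  have hνlam : Ψ (Φ y) = lam := hlam_uniq _ ⟨hν, by rw [← hy, hσΨ _ hyI]⟩
  rw [hy, hνlam]

/-- **Theorem 2.1 (Ricceri).** Let `X` be a topological space, `Φ : X → ℝ` with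
`Φ⁻¹(0) ≠ ∅`, and `J : X → ℝ` such that for every `λ > 0` the function
`x ↦ λ·Φ(x) − J(x)` is lower semicontinuous, inf-compact and admits a unique global
minimum.  Assume `J` has no global maximum.  Let `I ⊆ (0,∞)` be an open interval and
`Ψ : I → ℝ` increasing with `Ψ(I) = (0,∞)`.  Then there is a unique `x̃` with
`Φ(x̃) ∈ I` minimizing `x ↦ Ψ(Φ(x̃))·Φ(x) − J(x)` over `X`. -/
theorem stmt0 {X : Type*} [TopologicalSpace X] (Φ J : X → ℝ)
    (hΦ0 : ∃ x, Φ x = 0)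
    (hlsc : ∀ lam : ℝ, 0 < lam → LowerSemicontinuous (fun x => lam * Φ x - J x))
    (hinfcpt : ∀ lam : ℝ, 0 < lam → ∀ r : ℝ, IsCompact {x | lam * Φ x - J x ≤ r})
    (hmin : ∀ lam : ℝ, 0 < lam →
      ∃! x₀ : X, ∀ x, lam * Φ x₀ - J x₀ ≤ lam * Φ x - J x)
    (hJ : ¬ ∃ x₀ : X, ∀ x, J x ≤ J x₀)
    (I : Set ℝ) (hIsub : I ⊆ Set.Ioi 0) (hIopen : IsOpen I) (hIconn : I.OrdConnected)
    (Ψ : ℝ → ℝ) (hΨmono : StrictMonoOn Ψ I) (hΨsurj : Ψ '' I = Set.Ioi 0) :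
    ∃! xt : X, Φ xt ∈ I ∧
      ∀ x, Ψ (Φ xt) * Φ xt - J xt ≤ Ψ (Φ xt) * Φ x - J x :=
  stmt0_general Φ J hΦ0 hlsc hinfcpt hmin hJ I hIsub hIopen Ψ hΨmono hΨsurj
end

section
/- Let X be a topological space, let Φ : X → ℝ be a function with Φ⁻¹(0) ≠ ∅, and let J : X → ℝ be a function such that for every real λ > 0 the function x ↦ λΦ(x) − J(x) is lower semicontinuous, inf-compact, and admits a unique global minimum on X. Assume moreover that J has no global maximum on X. Let I ⊆ (0, +∞) be an open interval and let Ψ : I → ℝ be an increasing function with Ψ(I) = (0, +∞). Then there exists a point x̃ ∈ X such that Φ(x̃) ∈ I and Ψ(Φ(x̃))·Φ(x̃) − J(x̃) = inf_{x ∈ X} ( Ψ(Φ(x̃))·Φ(x) − J(x) ). -/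
open Filter Topology Set

private lemma le_of_eps {a b : ℝ} (h : ∀ ε : ℝ, 0 < ε → a ≤ b + ε) : a ≤ b := by
  by_contra hc
  push_neg at hc
  have := h ((a - b) / 2) (by linarith)
  linarith

private lemma lsc_cluster_le {X : Type*} [TopologicalSpace X] {f : X → ℝ}
    (hf : LowerSemicontinuous f) {u : ℕ → X} {x : X}
    (hx : MapClusterPt x atTop u) {c : ℝ} (hb : ∀ᶠ n in atTop, f (u n) ≤ c) :
    f x ≤ c := by
  by_contra hlt
  push_neg at hlt
  have hnb : ∀ᶠ y in 𝓝 x, c < f y := hf x c hlt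
  have hfreq : ∃ᶠ n in atTop, c < f (u n) := (mapClusterPt_iff_frequently.1 hx) _ hnb
  rcases (hfreq.and_eventually hb).exists with ⟨n, h1, h2⟩
  exact absurd h2 (not_le.2 h1)

/-- **Theorem 2.1 (Ricceri).** Let `X` be a topological space, `Φ : X → ℝ` with
`Φ⁻¹(0) ≠ ∅`, and `J : X → ℝ` such that for every `λ > 0` the function
`x ↦ λ·Φ(x) − J(x)` is lower semicontinuous, inf-compact and admits a unique global
minimum.  Assume `J` has no global maximum.  Let `I ⊆ (0,∞)` be an open interval and
`Ψ : I → ℝ` increasing with `Ψ(I) = (0,∞)`.  Then there is a unique `x̃` with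
`Φ(x̃) ∈ I` minimizing `x ↦ Ψ(Φ(x̃))·Φ(x) − J(x)` over `X`. -/
theorem stmt1 {X : Type*} [TopologicalSpace X] (Φ J : X → ℝ)
    (hΦ0 : ∃ x, Φ x = 0)
    (hlsc : ∀ lam : ℝ, 0 < lam → LowerSemicontinuous (fun x => lam * Φ x - J x))
    (hinfcpt : ∀ lam : ℝ, 0 < lam → ∀ r : ℝ, IsCompact {x | lam * Φ x - J x ≤ r})
    (hmin : ∀ lam : ℝ, 0 < lam →
      ∃! x₀ : X, ∀ x, lam * Φ x₀ - J x₀ ≤ lam * Φ x - J x)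
    (hJ : ¬ ∃ x₀ : X, ∀ x, J x ≤ J x₀)
    (I : Set ℝ) (hIsub : I ⊆ Set.Ioi 0) (hIopen : IsOpen I) (hIconn : I.OrdConnected)
    (Ψ : ℝ → ℝ) (hΨmono : StrictMonoOn Ψ I) (hΨsurj : Ψ '' I = Set.Ioi 0) :
    ∃ xt : X, Φ xt ∈ I ∧
      ∀ x, Ψ (Φ xt) * Φ xt - J xt ≤ Ψ (Φ xt) * Φ x - J x := by
  classical
  obtain ⟨z, hz⟩ := hΦ0
  have hsel : ∀ lam : ℝ, ∃ x₀ : X, 0 < lam →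
      ((∀ x, lam * Φ x₀ - J x₀ ≤ lam * Φ x - J x) ∧
       (∀ y, (∀ x, lam * Φ y - J y ≤ lam * Φ x - J x) → y = x₀)) := by
    intro lam
    by_cases h : 0 < lam
    · obtain ⟨x₀, h1, h2⟩ := hmin lam h
      exact ⟨x₀, fun _ => ⟨h1, h2⟩⟩
    · exact ⟨z, fun h' => absurd h' h⟩
  choose F hF using hsel
  have hmin' : ∀ lam : ℝ, 0 < lam → ∀ x, lam * Φ (F lam) - J (F lam) ≤ lam * Φ x - J x :=
    fun lam h => (hF lam h).1
  have huniq : ∀ lam : ℝ, 0 < lam →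
      ∀ y, (∀ x, lam * Φ y - J y ≤ lam * Φ x - J x) → y = F lam :=
    fun lam h => (hF lam h).2
  -- antitonicity of lam ↦ Φ (F lam)
  have hanti : ∀ a b : ℝ, 0 < a → a ≤ b → Φ (F b) ≤ Φ (F a) := by
    intro a b ha hab
    rcases eq_or_lt_of_le hab with rfl | h
    · exact le_refl _
    · have h1 := hmin' a ha (F b)
      have h2 := hmin' b (ha.trans h) (F a)
      nlinarith
  -- Key limit lemma: if u n → lam₀ and Φ(F(u n)) → t then t = Φ(F lam₀)
  have keyL : ∀ lam₀ : ℝ, 0 < lam₀ → ∀ u : ℕ → ℝ, (∀ n, 0 < u n) →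
      Tendsto u atTop (𝓝 lam₀) → ∀ t : ℝ,
      Tendsto (fun n => Φ (F (u n))) atTop (𝓝 t) → t = Φ (F lam₀) := by
    intro lam₀ hl u hu hul t htt
    set m₀ : ℝ := lam₀ * Φ (F lam₀) - J (F lam₀) with hm₀
    have hml : ∀ n, m₀ - (lam₀ - u n) * Φ (F (u n)) ≤ u n * Φ (F (u n)) - J (F (u n)) := by
      intro n
      have h1 := hmin' lam₀ hl (F (u n))
      nlinarith
    have hmr : ∀ n, u n * Φ (F (u n)) - J (F (u n)) ≤ m₀ + (u n - lam₀) * Φ (F lam₀) := by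
      intro n
      have h1 := hmin' (u n) (hu n) (F lam₀)
      nlinarith
    have hd0 : Tendsto (fun n => lam₀ - u n) atTop (𝓝 0) := by
      simpa using (tendsto_const_nhds (x := lam₀)).sub hul
    have hlb : Tendsto (fun n => m₀ - (lam₀ - u n) * Φ (F (u n))) atTop (𝓝 m₀) := by
      have := (tendsto_const_nhds (x := m₀)).sub (hd0.mul htt)
      simpa using this
    have hrb : Tendsto (fun n => m₀ + (u n - lam₀) * Φ (F lam₀)) atTop (𝓝 m₀) := by
      have hd0' : Tendsto (fun n => u n - lam₀) atTop (𝓝 0) := by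
        simpa using hul.sub (tendsto_const_nhds (x := lam₀))
      have := (tendsto_const_nhds (x := m₀)).add (hd0'.mul (tendsto_const_nhds (x := Φ (F lam₀))))
      simpa using this
    have hm : Tendsto (fun n => u n * Φ (F (u n)) - J (F (u n))) atTop (𝓝 m₀) :=
      tendsto_of_tendsto_of_tendsto_of_le_of_le hlb hrb hml hmr
    have hj : Tendsto (fun n => J (F (u n))) atTop (𝓝 (lam₀ * t - m₀)) := by
      have := (hul.mul htt).sub hm
      simpa using this
    have hK : Tendsto (fun n => lam₀ * Φ (F (u n)) - J (F (u n))) atTop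
        (𝓝 (lam₀ * t - (lam₀ * t - m₀))) := ((tendsto_const_nhds (x := lam₀)).mul htt).sub hj
    have hev : ∀ᶠ n in atTop, F (u n) ∈ {x | lam₀ * Φ x - J x ≤ m₀ + 1} := by
      have h1 : lam₀ * t - (lam₀ * t - m₀) < m₀ + 1 := by ring_nf; linarith
      exact (hK.eventually_lt_const h1).mono fun n h => h.le
    obtain ⟨xs, hxsK, hcp⟩ := (hinfcpt lam₀ hl (m₀ + 1)).exists_mapClusterPt
      (f := atTop) (u := fun n => F (u n)) (le_principal_iff.2 hev)
    have hcl : ∀ μ : ℝ, 0 < μ → μ * Φ xs - J xs ≤ μ * t - (lam₀ * t - m₀) := by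
      intro μ hμ
      have htf : Tendsto (fun n => μ * Φ (F (u n)) - J (F (u n))) atTop
          (𝓝 (μ * t - (lam₀ * t - m₀))) := ((tendsto_const_nhds (x := μ)).mul htt).sub hj
      refine le_of_eps ?_
      intro ε hε
      exact lsc_cluster_le (hlsc μ hμ) hcp
        ((htf.eventually_lt_const (by linarith)).mono fun n h => h.le)
    have hxmin : ∀ x, lam₀ * Φ xs - J xs ≤ lam₀ * Φ x - J x := by
      intro x
      have h1 := hcl lam₀ hl
      have h2 := hmin' lam₀ hl x
      linarith
    have hxe : xs = F lam₀ := huniq lam₀ hl xs hxmin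
    have ha := hcl (lam₀ + 1) (by linarith)
    have hb := hcl (lam₀ / 2) (by linarith)
    rw [hxe] at ha hb
    have h1 : Φ (F lam₀) ≤ t := by nlinarith
    have h2 : t ≤ Φ (F lam₀) := by nlinarith
    linarith
  -- continuity of lam ↦ Φ (F lam) on (0, ∞)
  have hdiv0 : ∀ c : ℝ, Tendsto (fun n : ℕ => c / (n + 2)) atTop (𝓝 0) := by
    intro c
    have h := (tendsto_const_div_atTop_nhds_zero_nat c).comp (tendsto_add_atTop_nat 2)
    have he : (fun n : ℕ => c / (n + 2)) = (fun n : ℕ => c / n) ∘ (fun n => n + 2) := by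
      funext n
      simp only [Function.comp_apply]
      push_cast
      ring
    rw [he]
    exact h
  have hcont : ∀ lam₀ : ℝ, 0 < lam₀ → ContinuousAt (fun lam => Φ (F lam)) lam₀ := by
    intro lam₀ hl
    have hfrac : ∀ n : ℕ, 0 < lam₀ / (n + 2) ∧ lam₀ / (n + 2) < lam₀ := by
      intro n
      constructor
      · positivity
      · rw [div_lt_iff₀ (by positivity)]
        nlinarith [Nat.cast_nonneg (α := ℝ) n]
    set a : ℕ → ℝ := fun n => lam₀ - lam₀ / (n + 2) with hadef
    set b : ℕ → ℝ := fun n => lam₀ + lam₀ / (n + 2) with hbdef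
    have hfracmono : ∀ m n : ℕ, m ≤ n → lam₀ / (n + 2) ≤ lam₀ / (m + 2) := by
      intro m n h
      apply div_le_div_of_nonneg_left hl.le (by positivity)
      have : (m : ℝ) ≤ n := Nat.cast_le.2 h
      linarith
    have hapos : ∀ n, 0 < a n := fun n => by
      have := (hfrac n).2; simp only [hadef]; linarith
    have halt : ∀ n, a n < lam₀ := fun n => by
      have := (hfrac n).1; simp only [hadef]; linarith
    have hbgt : ∀ n, lam₀ < b n := fun n => by
      have := (hfrac n).1; simp only [hbdef]; linarith
    have hamono : Monotone a := by
      intro m n h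
      have := hfracmono m n h
      simp only [hadef]; linarith
    have hbanti : Antitone b := by
      intro m n h
      have := hfracmono m n h
      simp only [hbdef]; linarith
    have hal : Tendsto a atTop (𝓝 lam₀) := by
      have := (tendsto_const_nhds (x := lam₀)).sub (hdiv0 lam₀)
      simpa using this
    have hbl : Tendsto b atTop (𝓝 lam₀) := by
      have := (tendsto_const_nhds (x := lam₀)).add (hdiv0 lam₀)
      simpa using this
    -- Φ(F(a n)) antitone in n, bounded below; converges to its inf
    have hφa_anti : Antitone (fun n => Φ (F (a n))) := fun m n h =>
      hanti (a m) (a n) (hapos m) (hamono h)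
    have hφa_bdd : BddBelow (range fun n => Φ (F (a n))) := by
      refine ⟨Φ (F lam₀), ?_⟩
      rintro _ ⟨n, rfl⟩
      exact hanti (a n) lam₀ (hapos n) (halt n).le
    have hφa : Tendsto (fun n => Φ (F (a n))) atTop (𝓝 (⨅ n, Φ (F (a n)))) :=
      tendsto_atTop_ciInf hφa_anti hφa_bdd
    have hainf : (⨅ n, Φ (F (a n))) = Φ (F lam₀) :=
      keyL lam₀ hl a hapos hal _ hφa
    have hφb_mono : Monotone (fun n => Φ (F (b n))) := fun m n h =>
      hanti (b n) (b m) (hl.trans (hbgt n)) (hbanti h)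
    have hφb_bdd : BddAbove (range fun n => Φ (F (b n))) := by
      refine ⟨Φ (F lam₀), ?_⟩
      rintro _ ⟨n, rfl⟩
      exact hanti lam₀ (b n) hl (hbgt n).le
    have hφb : Tendsto (fun n => Φ (F (b n))) atTop (𝓝 (⨆ n, Φ (F (b n)))) :=
      tendsto_atTop_ciSup hφb_mono hφb_bdd
    have hbsup : (⨆ n, Φ (F (b n))) = Φ (F lam₀) :=
      keyL lam₀ hl b (fun n => hl.trans (hbgt n)) hbl _ hφb
    refine tendsto_order.2 ⟨?_, ?_⟩
    · intro y hy
      -- y < Φ (F lam₀) = ⨆ Φ(F(b n)) : pick n with y < Φ(F(b n))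
      have hy' : y < ⨆ n, Φ (F (b n)) := by rw [hbsup]; exact hy
      obtain ⟨n, hn⟩ := exists_lt_of_lt_ciSup hy'
      have hmem : Ioo (0 : ℝ) (b n) ∈ 𝓝 lam₀ :=
        Ioo_mem_nhds hl (hbgt n)
      filter_upwards [hmem] with lam hlam
      exact lt_of_lt_of_le hn (hanti lam (b n) hlam.1 hlam.2.le)
    · intro y hy
      have hy' : ⨅ n, Φ (F (a n)) < y := by rw [hainf]; exact hy
      obtain ⟨n, hn⟩ := exists_lt_of_ciInf_lt hy'
      have hmem : Ioi (a n) ∈ 𝓝 lam₀ := Ioi_mem_nhds (halt n)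
      filter_upwards [hmem] with lam hlam
      exact lt_of_le_of_lt (hanti (a n) lam (hapos n) hlam.le) hn
  -- Φ(F lam) is unbounded as lam → 0⁺
  have hbig : ∀ C : ℝ, ∃ lam : ℝ, 0 < lam ∧ lam ≤ 1 ∧ C < Φ (F lam) := by
    intro C
    by_contra hcon
    push_neg at hcon
    -- hcon : ∀ lam, 0 < lam → lam ≤ 1 → Φ (F lam) ≤ C
    set u : ℕ → ℝ := fun n => 1 / (n + 1) with hudef
    have hu0 : ∀ n, 0 < u n := fun n => by positivity
    have hu1 : ∀ n, u n ≤ 1 := fun n => by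
      rw [hudef]
      rw [div_le_one (by positivity)]
      linarith [Nat.cast_nonneg (α := ℝ) n]
    have hφC : ∀ n, Φ (F (u n)) ≤ C := fun n => hcon (u n) (hu0 n) (hu1 n)
    have hφlo : ∀ n, Φ (F 1) ≤ Φ (F (u n)) := fun n => hanti (u n) 1 (hu0 n) (hu1 n)
    set m1 : ℝ := 1 * Φ (F 1) - J (F 1) with hm1
    -- bounds on J (F (u n))
    have hjub : ∀ n, J (F (u n)) ≤ C - m1 := by
      intro n
      have h1 := hmin' 1 one_pos (F (u n))
      have h2 := hφC n
      linarith
    have hmulo : ∀ n, min 0 (Φ (F 1)) ≤ u n * Φ (F (u n)) := by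
      intro n
      rcases le_or_gt 0 (Φ (F (u n))) with h | h
      · exact le_trans (min_le_left _ _) (mul_nonneg (hu0 n).le h)
      · refine le_trans (min_le_right _ _) ?_
        have h3 : 1 * Φ (F (u n)) ≤ u n * Φ (F (u n)) :=
          mul_le_mul_of_nonpos_right (hu1 n) h.le
        linarith [hφlo n]
    have hjlb : ∀ n, min 0 (Φ (F 1)) + J z ≤ J (F (u n)) := by
      intro n
      have h1 := hmin' (u n) (hu0 n) z
      rw [hz] at h1
      have h2 := hmulo n
      linarith
    set lo : ℝ := min 0 (Φ (F 1)) + J z with hlo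
    have hjmem : ∀ n, J (F (u n)) ∈ Icc lo (C - m1) := fun n => ⟨hjlb n, hjub n⟩
    obtain ⟨L', _, k, hk, hjk⟩ :=
      tendsto_subseq_of_bounded (Metric.isBounded_Icc lo (C - m1)) hjmem
    -- u (k n) → 0
    have huk : Tendsto (fun n => u (k n)) atTop (𝓝 0) :=
      tendsto_one_div_add_atTop_nhds_zero_nat.comp hk.tendsto_atTop
    -- u(k n) * Φ(F(u(k n))) → 0
    set B : ℝ := max (|C|) (|Φ (F 1)|) with hB
    have hφabs : ∀ n, -B ≤ Φ (F (u n)) ∧ Φ (F (u n)) ≤ B := by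
      intro n
      constructor
      · have := neg_abs_le (Φ (F 1))
        have := le_max_right (|C|) (|Φ (F 1)|)
        have := hφlo n
        simp only [hB]
        nlinarith [neg_abs_le (Φ (F 1)), le_max_right (|C|) (|Φ (F 1)|), hφlo n]
      · exact le_trans (hφC n) (le_trans (le_abs_self C) (le_max_left _ _))
    have hprod0 : Tendsto (fun n => u (k n) * Φ (F (u (k n)))) atTop (𝓝 0) := by
      have hneg : Tendsto (fun n => u (k n) * (-B)) atTop (𝓝 0) := by
        simpa using huk.mul (tendsto_const_nhds (x := -B))
      have hposb : Tendsto (fun n => u (k n) * B) atTop (𝓝 0) := by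
        simpa using huk.mul (tendsto_const_nhds (x := B))
      refine tendsto_of_tendsto_of_tendsto_of_le_of_le hneg hposb ?_ ?_
      · intro n
        exact mul_le_mul_of_nonneg_left (hφabs (k n)).1 (hu0 (k n)).le
      · intro n
        exact mul_le_mul_of_nonneg_left (hφabs (k n)).2 (hu0 (k n)).le
    -- every x: J x ≤ L'
    have hJle : ∀ x, J x ≤ L' := by
      intro x
      have hkey : ∀ n, J x ≤ u (k n) * Φ x - u (k n) * Φ (F (u (k n))) + J (F (u (k n))) := by
        intro n
        have h1 := hmin' (u (k n)) (hu0 (k n)) x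
        linarith
      have htR : Tendsto (fun n => u (k n) * Φ x - u (k n) * Φ (F (u (k n))) + J (F (u (k n))))
          atTop (𝓝 L') := by
        have h1 : Tendsto (fun n => u (k n) * Φ x) atTop (𝓝 0) := by
          simpa using huk.mul (tendsto_const_nhds (x := Φ x))
        have := (h1.sub hprod0).add hjk
        simpa using this
      exact ge_of_tendsto' htR hkey
    -- cluster point
    have hmemK : ∀ n, F (u (k n)) ∈ {x | 1 * Φ x - J x ≤ C - lo} := by
      intro n
      have h1 := hφC (k n)
      have h2 := hjlb (k n)
      simp only [mem_setOf_eq, one_mul]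
      linarith
    obtain ⟨xs, _, hcp⟩ := (hinfcpt 1 one_pos (C - lo)).exists_mapClusterPt
      (f := atTop) (u := fun n => F (u (k n)))
      (le_principal_iff.2 (mem_map.2 (Eventually.of_forall hmemK)))
    have hJxs : L' ≤ J xs := by
      have hcl : ∀ μ : ℝ, 0 < μ → μ * Φ xs - J xs ≤ μ * C - L' := by
        intro μ hμ
        refine le_of_eps ?_
        intro ε hε
        refine lsc_cluster_le (hlsc μ hμ) hcp ?_
        have hev : ∀ᶠ n in atTop, L' - ε < J (F (u (k n))) :=
          hjk.eventually_const_lt (by linarith)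
        filter_upwards [hev] with n hn
        have h1 : μ * Φ (F (u (k n))) ≤ μ * C := mul_le_mul_of_nonneg_left (hφC (k n)) hμ.le
        linarith
      refine le_of_eps ?_
      intro ε hε
      rcases le_or_gt (C - Φ xs) 0 with h | h
      · have := hcl 1 one_pos
        linarith
      · have := hcl (ε / (C - Φ xs)) (by positivity)
        have he : ε / (C - Φ xs) * (C - Φ xs) = ε := by
          field_simp
        nlinarith
    exact hJ ⟨xs, fun x => (hJle x).trans hJxs⟩
  -- Φ (F lam) becomes small as lam → ∞
  have hsmall : ∀ ε : ℝ, 0 < ε → ∃ lam : ℝ, 0 < lam ∧ Φ (F lam) < ε := by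
    intro ε hε
    by_contra h
    push_neg at h
    set lam : ℝ := max 1 ((Φ (F 1) - (1 * Φ (F 1) - J (F 1)) - J z + 1) / ε) with hlam
    have hl1 : (1 : ℝ) ≤ lam := le_max_left _ _
    have hlpos : 0 < lam := lt_of_lt_of_le one_pos hl1
    have h1 : J (F lam) ≤ Φ (F lam) - (1 * Φ (F 1) - J (F 1)) := by
      have := hmin' 1 one_pos (F lam)
      linarith
    have h2 : Φ (F lam) ≤ Φ (F 1) := hanti 1 lam one_pos hl1
    have h3 : lam * Φ (F lam) + J z ≤ J (F lam) := by
      have := hmin' lam hlpos z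
      rw [hz] at this
      linarith
    have h4 : lam * ε ≤ lam * Φ (F lam) :=
      mul_le_mul_of_nonneg_left (h lam hlpos) hlpos.le
    have h5 : (Φ (F 1) - (1 * Φ (F 1) - J (F 1)) - J z + 1) / ε ≤ lam := le_max_right _ _
    have h6 : Φ (F 1) - (1 * Φ (F 1) - J (F 1)) - J z + 1 ≤ lam * ε := by
      rw [div_le_iff₀ hε] at h5
      linarith
    linarith
  -- the inverse g of Ψ
  have hgsel : ∀ y : ℝ, ∃ c : ℝ, 0 < y → (c ∈ I ∧ Ψ c = y) := by
    intro y
    by_cases hy : 0 < y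
    · have : y ∈ Ψ '' I := by rw [hΨsurj]; exact hy
      obtain ⟨c, hc, hcy⟩ := this
      exact ⟨c, fun _ => ⟨hc, hcy⟩⟩
    · exact ⟨0, fun h' => absurd h' hy⟩
  choose g hg using hgsel
  have hgI : ∀ y : ℝ, 0 < y → g y ∈ I := fun y hy => (hg y hy).1
  have hgΨ : ∀ y : ℝ, 0 < y → Ψ (g y) = y := fun y hy => (hg y hy).2
  have hgmono : StrictMonoOn g (Ioi 0) := by
    intro p hp q hq hpq
    by_contra hle
    push_neg at hle
    have h1 := hΨmono.monotoneOn (hgI q hq) (hgI p hp) hle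
    rw [hgΨ q hq, hgΨ p hp] at h1
    exact absurd h1 (not_le.2 hpq)
  have hgim : g '' Ioi 0 = I := by
    apply Subset.antisymm
    · rintro _ ⟨y, hy, rfl⟩
      exact hgI y hy
    · intro c hc
      have hΨc : 0 < Ψ c := by
        have h1 : Ψ c ∈ Ψ '' I := ⟨c, hc, rfl⟩
        rw [hΨsurj] at h1
        exact h1
      exact ⟨Ψ c, hΨc, hΨmono.injOn (hgI _ hΨc) hc (hgΨ (Ψ c) hΨc)⟩
  have hgcont : ∀ y : ℝ, 0 < y → ContinuousAt g y := by
    intro y hy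
    refine hgmono.continuousAt_of_image_mem_nhds (isOpen_Ioi.mem_nhds hy) ?_
    rw [hgim]
    exact hIopen.mem_nhds (hgI y hy)
  -- endpoints for the intermediate value theorem
  have hg1I : g 1 ∈ I := hgI 1 one_pos
  have hg1pos : 0 < g 1 := hIsub hg1I
  obtain ⟨lam', hlam', hφ'⟩ := hsmall (g 1) hg1pos
  set lb : ℝ := max lam' 2 with hlbdef
  have hlb2 : (2 : ℝ) ≤ lb := le_max_right _ _
  have hlbpos : 0 < lb := by linarith
  have hφlb : Φ (F lb) < g 1 :=
    lt_of_le_of_lt (hanti lam' lb hlam' (le_max_left _ _)) hφ'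
  have hglb : g 1 < g lb :=
    hgmono (mem_Ioi.2 one_pos) (mem_Ioi.2 hlbpos) (by linarith)
  obtain ⟨la, hla, hla1, hCa⟩ := hbig (g 1)
  have hgla : g la ≤ g 1 := by
    rcases eq_or_lt_of_le hla1 with h | h
    · rw [h]
    · exact (hgmono (mem_Ioi.2 hla) (mem_Ioi.2 one_pos) h).le
  have hlalb : la ≤ lb := le_trans hla1 (by linarith)
  have hIcc : Icc la lb ⊆ Ioi 0 := fun x hx => lt_of_lt_of_le hla hx.1
  have hconth : ContinuousOn (fun lam => Φ (F lam) - g lam) (Icc la lb) := by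
    intro x hx
    exact (((hcont x (hIcc hx)).sub (hgcont x (hIcc hx)))).continuousWithinAt
  have hivt := intermediate_value_Icc' hlalb hconth
  have h0mem : (0 : ℝ) ∈ Icc (Φ (F lb) - g lb) (Φ (F la) - g la) := by
    constructor
    · linarith
    · linarith
  obtain ⟨ls, hlsmem, hls0⟩ := hivt h0mem
  have hlspos : 0 < ls := lt_of_lt_of_le hla hlsmem.1
  have hkey : Φ (F ls) = g ls := by
    have : Φ (F ls) - g ls = 0 := hls0
    linarith
  refine ⟨F ls, ?_, ?_⟩
  · rw [hkey]
    exact hgI ls hlspos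
  · intro x
    have hΨv : Ψ (Φ (F ls)) = ls := by rw [hkey]; exact hgΨ ls hlspos
    rw [hΨv]
    exact hmin' ls hlspos x
end

section
/- Let X be a nonempty set and let φ : X × [0, +∞) → ℝ be a function such that for each x ∈ X the function λ ↦ φ(x, λ) is continuous on [0, +∞). If sup_{λ > 0} inf_{x ∈ X} φ(x, λ) = inf_{x ∈ X} sup_{λ > 0} φ(x, λ), then sup_{λ ≥ 0} inf_{x ∈ X} φ(x, λ) = inf_{x ∈ X} sup_{λ ≥ 0} φ(x, λ), where all suprema and infima are taken in the extended real numbers. -/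
open Filter Set Topology

/-! Continuity at `0` means that adding `λ = 0` does not change any inner supremum `sup_λ φ(x, λ)`,
so the right-hand side is the same for `λ > 0` and `λ ≥ 0`, while the left-hand side can only grow;
weak duality gives the reverse inequality. -/

theorem ContinuousWithinAt.le_biSup {α β : Type*} [TopologicalSpace α] [CompleteLattice β]
    [TopologicalSpace β] [ClosedIicTopology β] {f : α → β} {s : Set α} {a : α}
    [(𝓝[s] a).NeBot] (hf : ContinuousWithinAt f s a) : f a ≤ ⨆ x ∈ s, f x :=
  le_of_tendsto hf (eventually_mem_nhdsWithin.mono fun _ hx => le_iSup₂ (f := fun x _ => f x) _ hx)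

theorem biSup_Ici_eq_biSup_Ioi {α β : Type*} [TopologicalSpace α] [LinearOrder α] {a : α}
    [(𝓝[>] a).NeBot] [CompleteLattice β] [TopologicalSpace β] [ClosedIicTopology β]
    {f : α → β} (hf : ContinuousWithinAt f (Ioi a) a) :
    ⨆ x ∈ Ici a, f x = ⨆ x ∈ Ioi a, f x := by
  rw [← Ioi_insert, iSup_insert, sup_eq_right.mpr hf.le_biSup]

theorem biSup_biInf_le_biInf_biSup {α ι κ : Type*} [CompleteLattice α] (s : Set ι) (f : κ → ι → α) :
    ⨆ i ∈ s, ⨅ k, f k i ≤ ⨅ k, ⨆ i ∈ s, f k i :=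
  iSup₂_le fun i hi => le_iInf fun k => (iInf_le _ k).trans (le_iSup₂ (f := fun i _ => f k i) i hi)

theorem stmt7_general {X : Type*} (φ : X → ℝ → ℝ)
    (hc : ∀ x : X, ContinuousOn (φ x) (Set.Ici 0))
    (h : (⨆ l ∈ Set.Ioi (0 : ℝ), ⨅ x : X, (φ x l : EReal)) =
         ⨅ x : X, ⨆ l ∈ Set.Ioi (0 : ℝ), (φ x l : EReal)) :
    (⨆ l ∈ Set.Ici (0 : ℝ), ⨅ x : X, (φ x l : EReal)) =
      ⨅ x : X, ⨆ l ∈ Set.Ici (0 : ℝ), (φ x l : EReal) := by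
  have hsup : ∀ x, ⨆ l ∈ Ici (0 : ℝ), (φ x l : EReal) = ⨆ l ∈ Ioi (0 : ℝ), (φ x l : EReal) :=
    fun x => biSup_Ici_eq_biSup_Ioi <|
      continuous_coe_real_ereal.continuousAt.comp_continuousWithinAt <|
        (hc x 0 self_mem_Ici).mono Ioi_subset_Ici_self
  refine le_antisymm (biSup_biInf_le_biInf_biSup _ _) ?_
  calc ⨅ x, ⨆ l ∈ Ici (0 : ℝ), (φ x l : EReal)
      = ⨅ x, ⨆ l ∈ Ioi (0 : ℝ), (φ x l : EReal) := iInf_congr hsup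
    _ = ⨆ l ∈ Ioi (0 : ℝ), ⨅ x, (φ x l : EReal) := h.symm
    _ ≤ ⨆ l ∈ Ici (0 : ℝ), ⨅ x, (φ x l : EReal) := biSup_mono fun _ hl => Ioi_subset_Ici_self hl

/-- If `φ : X × [0,∞) → ℝ` is continuous in the second variable and
`sup_{λ>0} inf_x φ(x,λ) = inf_x sup_{λ>0} φ(x,λ)`, then
`sup_{λ≥0} inf_x φ(x,λ) = inf_x sup_{λ≥0} φ(x,λ)` (in the extended reals). -/
theorem stmt7 {X : Type*} [Nonempty X] (φ : X → ℝ → ℝ)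
    (hc : ∀ x : X, ContinuousOn (φ x) (Set.Ici 0))
    (h : (⨆ l ∈ Set.Ioi (0 : ℝ), ⨅ x : X, (φ x l : EReal)) =
         ⨅ x : X, ⨆ l ∈ Set.Ioi (0 : ℝ), (φ x l : EReal)) :
    (⨆ l ∈ Set.Ici (0 : ℝ), ⨅ x : X, (φ x l : EReal)) =
      ⨅ x : X, ⨆ l ∈ Set.Ici (0 : ℝ), (φ x l : EReal) :=
  stmt7_general φ hc h
end

section
/- Let X be a nonempty topological space and let φ : X × [0, +∞) → ℝ be a function such that: (i) for each x ∈ X, the function λ ↦ φ(x, λ) is continuous on [0, +∞); (ii) for each λ ≥ 0, the function x ↦ φ(x, λ) is lower semicontinuous on X, and for some λ₀ > 0 the function x ↦ φ(x, λ₀) is inf-compact; (iii) there exists x₀ ∈ X such that the function λ ↦ φ(x₀, λ) is sup-compact on [0, +∞); (iv) sup_{λ ≥ 0} inf_{x ∈ X} φ(x, λ) = inf_{x ∈ X} sup_{λ ≥ 0} φ(x, λ), and this common value is a real number. Then there exists a pair (x̃, λ̃) ∈ X × [0, +∞) such that sup_{λ ≥ 0} φ(x̃, λ) = φ(x̃,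 λ̃) = inf_{x ∈ X} φ(x, λ̃). -/
open Filter Set

/-- Attainment of a saddle value: let `X` be a nonempty topological space and
`φ : X × [0,∞) → ℝ` be such that (i) `φ(x,·)` is continuous on `[0,∞)` for each `x`;
(ii) `φ(·,λ)` is lower semicontinuous for each `λ ≥ 0` and inf-compact for some
`λ₀ > 0`; (iii) `φ(x₀,·)` is sup-compact on `[0,∞)` for some `x₀`;
(iv) `sup_{λ≥0} inf_x φ = inf_x sup_{λ≥0} φ`, a real number.  Then there exists
`(x̃, λ̃)` with `sup_{λ≥0} φ(x̃,λ) = φ(x̃,λ̃) = inf_x φ(x,λ̃)`. -/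
theorem stmt8 {X : Type*} [TopologicalSpace X] [Nonempty X] (φ : X → ℝ → ℝ)
    (hc : ∀ x : X, ContinuousOn (φ x) (Set.Ici 0))
    (hlsc : ∀ l : ℝ, 0 ≤ l → LowerSemicontinuous (fun x => φ x l))
    (hinfcpt : ∃ l₀ : ℝ, 0 < l₀ ∧ ∀ r : ℝ, IsCompact {x : X | φ x l₀ ≤ r})
    (hsupcpt : ∃ x₀ : X, ∀ r : ℝ, IsCompact {l : ℝ | 0 ≤ l ∧ r ≤ φ x₀ l})
    (hminimax : ∃ c : ℝ,
      (⨆ l ∈ Set.Ici (0 : ℝ), ⨅ x : X, (φ x l : EReal)) = (c : EReal) ∧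
      (⨅ x : X, ⨆ l ∈ Set.Ici (0 : ℝ), (φ x l : EReal)) = (c : EReal)) :
    ∃ (xt : X) (lt : ℝ), 0 ≤ lt ∧
      (⨆ l ∈ Set.Ici (0 : ℝ), (φ xt l : EReal)) = (φ xt lt : EReal) ∧
      (⨅ x : X, (φ x lt : EReal)) = (φ xt lt : EReal) := by
  obtain ⟨c, hsup_inf, hinf_sup⟩ := hminimax
  obtain ⟨l₀, hl₀, hcptX⟩ := hinfcpt
  obtain ⟨x₀, hcptL⟩ := hsupcpt
  set g : X → EReal := fun x => ⨆ l ∈ Set.Ici (0 : ℝ), (φ x l : EReal) with hg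
  set h : ℝ → EReal := fun l => ⨅ x : X, (φ x l : EReal) with hh
  -- tendsto facts
  have htend : Tendsto (fun n : ℕ => (1 : ℝ) / (n + 1)) atTop (nhds 0) :=
    tendsto_one_div_add_atTop_nhds_zero_nat
  -- Step 1: find xt with g xt = c
  have Kdef : ∀ r : ℝ, {x : X | g x ≤ (r : EReal)}
      = ⋂ l ∈ Set.Ici (0 : ℝ), {x : X | φ x l ≤ r} := by
    intro r; ext x
    simp only [hg, mem_setOf_eq, iSup₂_le_iff, mem_iInter₂, EReal.coe_le_coe_iff, mem_Ici]
  have Kclosed : ∀ r : ℝ, IsClosed {x : X | g x ≤ (r : EReal)} := by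
    intro r; rw [Kdef]
    exact isClosed_biInter fun l hl => (hlsc l hl).isClosed_preimage r
  have Ksub : ∀ r : ℝ, {x : X | g x ≤ (r : EReal)} ⊆ {x : X | φ x l₀ ≤ r} := by
    intro r x hx
    have h1 : (φ x l₀ : EReal) ≤ (r : EReal) :=
      le_trans (le_iSup₂ (f := fun l _ => (φ x l : EReal)) l₀ hl₀.le) hx
    exact EReal.coe_le_coe_iff.1 h1
  have Kcompact : ∀ r : ℝ, IsCompact {x : X | g x ≤ (r : EReal)} :=
    fun r => (hcptX r).of_isClosed_subset (Kclosed r) (Ksub r)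
  have hinfg : (⨅ x : X, g x) = (c : EReal) := hinf_sup
  have Kne : ∀ n : ℕ, {x : X | g x ≤ ((c + 1 / (n + 1) : ℝ) : EReal)}.Nonempty := by
    intro n
    have hlt : (⨅ x : X, g x) < ((c + 1 / (n + 1) : ℝ) : EReal) := by
      rw [hinfg]
      exact_mod_cast (lt_add_of_pos_right c (by positivity))
    obtain ⟨x, hx⟩ := iInf_lt_iff.1 hlt
    exact ⟨x, hx.le⟩
  have Kanti : ∀ n : ℕ, {x : X | g x ≤ ((c + 1 / (n + 1 + 1) : ℝ) : EReal)}
      ⊆ {x : X | g x ≤ ((c + 1 / (n + 1) : ℝ) : EReal)} := by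
    intro n x hx
    refine le_trans hx (EReal.coe_le_coe_iff.2 ?_)
    have : (1 : ℝ) / (n + 1 + 1) ≤ 1 / (n + 1) := by
      exact one_div_le_one_div_of_le (by positivity) (by linarith)
    linarith
  obtain ⟨xt, hxt⟩ := IsCompact.nonempty_iInter_of_sequence_nonempty_isCompact_isClosed
    (fun n => {x : X | g x ≤ ((c + 1 / (n + 1) : ℝ) : EReal)})
    (fun n => by exact_mod_cast Kanti n) Kne (Kcompact _) (fun n => Kclosed _)
  have hgxt_le : g xt ≤ (c : EReal) := by
    have ht : Tendsto (fun n : ℕ => ((c + 1 / (n + 1) : ℝ) : EReal)) atTop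
        (nhds (c : EReal)) := by
      rw [EReal.tendsto_coe]
      simpa using tendsto_const_nhds.add htend
    exact ge_of_tendsto' ht (fun n => mem_iInter.1 hxt n)
  have hgxt : g xt = (c : EReal) :=
    le_antisymm hgxt_le (hinfg ▸ iInf_le _ xt)
  -- Step 2: find lt ≥ 0 with h lt = c
  have Tdef : ∀ r : ℝ, {l : ℝ | 0 ≤ l ∧ (r : EReal) ≤ h l}
      = ⋂ x : X, (Set.Ici 0 ∩ (φ x) ⁻¹' Set.Ici r) := by
    intro r; ext l
    simp only [mem_setOf_eq, hh, le_iInf_iff, EReal.coe_le_coe_iff, mem_iInter,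
      mem_inter_iff, mem_Ici, mem_preimage]
    exact ⟨fun ⟨h0, hall⟩ x => ⟨h0, hall x⟩,
      fun hall => ⟨(hall (Classical.arbitrary X)).1, fun x => (hall x).2⟩⟩
  have Tclosed : ∀ r : ℝ, IsClosed {l : ℝ | 0 ≤ l ∧ (r : EReal) ≤ h l} := by
    intro r; rw [Tdef]
    exact isClosed_iInter fun x =>
      (hc x).preimage_isClosed_of_isClosed isClosed_Ici isClosed_Ici
  have Tsub : ∀ r : ℝ, {l : ℝ | 0 ≤ l ∧ (r : EReal) ≤ h l}
      ⊆ {l : ℝ | 0 ≤ l ∧ r ≤ φ x₀ l} := by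
    rintro r l ⟨h0, hr⟩
    exact ⟨h0, EReal.coe_le_coe_iff.1 (le_trans hr (iInf_le _ x₀))⟩
  have Tcompact : ∀ r : ℝ, IsCompact {l : ℝ | 0 ≤ l ∧ (r : EReal) ≤ h l} :=
    fun r => (hcptL r).of_isClosed_subset (Tclosed r) (Tsub r)
  have hsuph : (⨆ l ∈ Set.Ici (0 : ℝ), h l) = (c : EReal) := hsup_inf
  have Tne : ∀ n : ℕ, {l : ℝ | 0 ≤ l ∧ ((c - 1 / (n + 1) : ℝ) : EReal) ≤ h l}.Nonempty := by
    intro n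
    have hlt : ((c - 1 / (n + 1) : ℝ) : EReal) < ⨆ l ∈ Set.Ici (0 : ℝ), h l := by
      rw [hsuph]
      exact_mod_cast (sub_lt_self c (by positivity))
    obtain ⟨l, hl⟩ := lt_iSup_iff.1 hlt
    obtain ⟨hl0, hl'⟩ := lt_iSup_iff.1 hl
    exact ⟨l, hl0, hl'.le⟩
  have Tanti : ∀ n : ℕ, {l : ℝ | 0 ≤ l ∧ ((c - 1 / (n + 1 + 1) : ℝ) : EReal) ≤ h l}
      ⊆ {l : ℝ | 0 ≤ l ∧ ((c - 1 / (n + 1) : ℝ) : EReal) ≤ h l} := by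
    rintro n l ⟨h0, hr⟩
    refine ⟨h0, le_trans (EReal.coe_le_coe_iff.2 ?_) hr⟩
    have : (1 : ℝ) / (n + 1 + 1) ≤ 1 / (n + 1) := by
      exact one_div_le_one_div_of_le (by positivity) (by linarith)
    linarith
  obtain ⟨lt, hlt⟩ := IsCompact.nonempty_iInter_of_sequence_nonempty_isCompact_isClosed
    (fun n => {l : ℝ | 0 ≤ l ∧ ((c - 1 / (n + 1) : ℝ) : EReal) ≤ h l})
    (fun n => by exact_mod_cast Tanti n) Tne (Tcompact _) (fun n => Tclosed _)
  have hlt0 : (0 : ℝ) ≤ lt := (mem_iInter.1 hlt 0).1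
  have hhlt_ge : (c : EReal) ≤ h lt := by
    have ht : Tendsto (fun n : ℕ => ((c - 1 / (n + 1) : ℝ) : EReal)) atTop
        (nhds (c : EReal)) := by
      rw [EReal.tendsto_coe]
      simpa using tendsto_const_nhds.sub htend
    exact le_of_tendsto' ht (fun n => (mem_iInter.1 hlt n).2)
  have hhlt : h lt = (c : EReal) := by
    refine le_antisymm ?_ hhlt_ge
    calc h lt ≤ ⨆ l ∈ Set.Ici (0 : ℝ), h l :=
          le_iSup₂ (f := fun l _ => h l) lt hlt0
      _ = (c : EReal) := hsuph
  -- Step 3: squeeze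
  have hmid1 : h lt ≤ (φ xt lt : EReal) := iInf_le _ xt
  have hmid2 : (φ xt lt : EReal) ≤ g xt :=
    le_iSup₂ (f := fun l _ => (φ xt l : EReal)) lt hlt0
  have hphi : (φ xt lt : EReal) = (c : EReal) :=
    le_antisymm (hgxt ▸ hmid2) (hhlt ▸ hmid1)
  exact ⟨xt, lt, hlt0, by rw [hphi]; exact hgxt, by rw [hphi]; exact hhlt⟩
end

section
/- Let X be a nonempty topological space, let Φ : X → ℝ with Φ⁻¹(0) ≠ ∅, let J : X → ℝ, let I ⊆ (0, +∞) be an open interval, let Ψ : I → ℝ be increasing with Ψ(I) = (0, +∞), let g : [0, +∞) → ℝ be the continuous increasing extension of Ψ⁻¹ with g(0) = inf I, and define φ : X × [0, +∞) → ℝ by φ(x, λ) = λΦ(x) − J(x) − ∫₀^λ g(t) dt. Suppose (x̃, λ̃) ∈ X × [0, +∞) satisfies sup_{λ ≥ 0} φ(x̃, λ) = φ(x̃, λ̃) = inf_{x ∈ X} φ(x, λ̃), and suppose J has no global maximum on X. Then λ̃ > 0, Φ(x̃) = g(λ̃) ∈ I, λ̃ = Ψ(Φ(x̃)), and Ψ(Φ(x̃))·Φ(x̃)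 − J(x̃) = inf_{x ∈ X} ( Ψ(Φ(x̃))·Φ(x) − J(x) ). -/
/-- Final step in the proof of Theorem 2.1: with `φ(x,λ) = λΦ(x) − J(x) − ∫₀^λ g`,
where `g` is the continuous increasing extension of `Ψ⁻¹` with `g(0) = inf I`, any
saddle point `(x̃, λ̃)` (with `sup_{λ≥0} φ(x̃,λ) = φ(x̃,λ̃) = inf_x φ(x,λ̃)`) satisfies
`λ̃ > 0`, `Φ(x̃) = g(λ̃) ∈ I`, `λ̃ = Ψ(Φ(x̃))`, and `x̃` minimizes
`x ↦ Ψ(Φ(x̃))Φ(x) − J(x)`, provided `J` has no global maximum. -/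
theorem stmt14 {X : Type*} [TopologicalSpace X] [Nonempty X]
    (Φ J : X → ℝ) (hΦ0 : ∃ x, Φ x = 0)
    (I : Set ℝ) (hIsub : I ⊆ Set.Ioi 0) (hIopen : IsOpen I) (hIconn : I.OrdConnected)
    (Ψ : ℝ → ℝ) (hΨmono : StrictMonoOn Ψ I) (hΨsurj : Ψ '' I = Set.Ioi 0)
    (g : ℝ → ℝ)
    (hg_inv : ∀ l : ℝ, 0 < l → g l ∈ I ∧ Ψ (g l) = l)
    (hg_zero : g 0 = sInf I)
    (hgc : ContinuousOn g (Set.Ici 0)) (hgm : StrictMonoOn g (Set.Ici 0))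
    (xt : X) (lt : ℝ) (hlt : 0 ≤ lt)
    (hsup : ∀ l : ℝ, 0 ≤ l →
      l * Φ xt - J xt - (∫ t in (0 : ℝ)..l, g t) ≤
        lt * Φ xt - J xt - ∫ t in (0 : ℝ)..lt, g t)
    (hinf : ∀ x : X,
      lt * Φ xt - J xt - (∫ t in (0 : ℝ)..lt, g t) ≤
        lt * Φ x - J x - ∫ t in (0 : ℝ)..lt, g t)
    (hJ : ¬ ∃ x₀ : X, ∀ x, J x ≤ J x₀) :
    0 < lt ∧ Φ xt = g lt ∧ Φ xt ∈ I ∧ lt = Ψ (Φ xt) ∧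
      ∀ x, Ψ (Φ xt) * Φ xt - J xt ≤ Ψ (Φ xt) * Φ x - J x := by
  -- λ̃ > 0
  have hpos : 0 < lt := by
    rcases hlt.lt_or_eq with h | h
    · exact h
    · exfalso
      apply hJ
      refine ⟨xt, fun x => ?_⟩
      have := hinf x
      rw [← h] at this
      simp only [zero_mul] at this
      linarith
  -- derivative argument
  set F : ℝ → ℝ := fun l => l * Φ xt - ∫ t in (0:ℝ)..l, g t with hF
  have hmax : IsLocalMax F lt := by
    filter_upwards [Ici_mem_nhds hpos] with l hl
    have := hsup l hl
    simp only [F]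
    linarith
  have hcontAt : ContinuousAt g lt :=
    (hgc lt hlt).continuousAt (Ici_mem_nhds hpos)
  have hint : IntervalIntegrable g MeasureTheory.volume 0 lt :=
    (hgc.mono (by rw [Set.uIcc_of_le hlt]; exact Set.Icc_subset_Ici_self)).intervalIntegrable
  have hmeas : StronglyMeasurableAtFilter g (nhds lt) MeasureTheory.volume :=
    ContinuousOn.stronglyMeasurableAtFilter isOpen_Ioi
      (hgc.mono (Set.Ioi_subset_Ici le_rfl)) lt hpos
  have hderivInt : HasDerivAt (fun l => ∫ t in (0:ℝ)..l, g t) (g lt) lt :=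
    intervalIntegral.integral_hasDerivAt_right hint hmeas hcontAt
  have hderivF : HasDerivAt F (Φ xt - g lt) lt :=
    (hasDerivAt_mul_const (Φ xt)).sub hderivInt
  have hzero : Φ xt - g lt = 0 := hmax.hasDerivAt_eq_zero hderivF
  have hΦg : Φ xt = g lt := by linarith
  obtain ⟨hmem, hPsi⟩ := hg_inv lt hpos
  refine ⟨hpos, hΦg, hΦg ▸ hmem, by rw [hΦg, hPsi], fun x => ?_⟩
  have := hinf x
  rw [hΦg] at this
  rw [hΦg, hPsi]
  linarith
end
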